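/- arXiv:math/0412554 — 9 statements merged into one kernel-verified Lean document; each statement's English description precedes it below -/
import Mathlib

section
/- If every two elements of a tree T have a greatest lower bound, then every nonempty subset of T has a greatest lower bound. -/
/-- A tree: a partial order in which the set of strict predecessors of every
element is well-ordered. -/
def IsTree (α : Type*) [PartialOrder α] : Prop :=
  ∀ t : α, IsWellOrder {s : α // s < t} (fun a b => (a : α) < b)

/-!
Fix `t ∈ S` and let `f s` be the greatest lower bound of `{t, s}`. All `f s` lie below `t`, and
the elements below `t` in a tree form a well-order, so some `f s₀` with `s₀ ∈ S` is least among
them. It is below every `f s ≤ s`, and any lower bound of `S` is below both `t` and `s₀`, hence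
below `f s₀`.
-/

open Set

section

variable {α : Type*} [PartialOrder α]

theorem IsTree.exists_isLeast_of_subset_Iic (htree : IsTree α) {t : α} {A : Set α}
    (hA : A ⊆ Iic t) (hne : A.Nonempty) : ∃ m, IsLeast A m := by
  by_cases hAt : A ⊆ {t}
  · exact ⟨t, (hne.subset_singleton_iff.mp hAt) ▸ isLeast_singleton⟩
  obtain ⟨a, haA, hat⟩ := not_subset.mp hAt
  have hlt : a < t := lt_of_le_of_ne (hA haA) hat
  have hwo := htree t
  let B : Set {s : α // s < t} := {x | (x : α) ∈ A}
  obtain ⟨m, hmB, hmin⟩ := hwo.wf.has_min B ⟨⟨a, hlt⟩, haA⟩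
  have hm_le : ∀ x ∈ B, (m : α) ≤ x := fun x hx =>
    (trichotomous_of (fun a b : {s : α // s < t} => (a : α) < b) m x).elim le_of_lt
      fun h => h.elim (fun h => (congrArg Subtype.val h).le) fun h => (hmin x hx h).elim
  refine ⟨m, hmB, fun x hx => ?_⟩
  rcases (hA hx).lt_or_eq with hxt | rfl
  · exact hm_le ⟨x, hxt⟩ hx
  · exact m.2.le

theorem IsLeast.isGLB_of_forall_isGLB_pair {S : Set α} {t m : α} {f : α → α} (ht : t ∈ S)
    (hf : ∀ s, IsGLB {t, s} (f s)) (hm : IsLeast (f '' S) m) : IsGLB S m := by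
  obtain ⟨⟨s₀, hs₀, rfl⟩, hmin⟩ := hm
  refine ⟨fun s hs => (hmin ⟨s, hs, rfl⟩).trans ((hf s).1 (by simp)), fun b hb => (hf s₀).2 ?_⟩
  rintro _ (rfl | rfl)
  exacts [hb ht, hb hs₀]

end

theorem stmt_1 {α : Type*} [PartialOrder α] (htree : IsTree α)
    (hglb2 : ∀ a b : α, ∃ g : α, IsGLB {a, b} g) :
    ∀ S : Set α, S.Nonempty → ∃ g : α, IsGLB S g := by
  rintro S ⟨t, ht⟩
  choose f hf using hglb2 t
  have hfS : f '' S ⊆ Iic t := by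
    rintro _ ⟨s, -, rfl⟩
    exact (hf s).1 (by simp)
  obtain ⟨m, hm⟩ := htree.exists_isLeast_of_subset_Iic hfS ⟨f t, t, ht, rfl⟩
  exact ⟨m, hm.isGLB_of_forall_isGLB_pair ht hf⟩
end

section
/- Let A be a subset of a tree T with at least two elements such that A has a greatest lower bound. Then there exist elements a₁, a₂ ∈ A such that the greatest lower bound of {a₁, a₂} equals the greatest lower bound of A. -/
/-! In a tree the elements below a fixed `a ∈ A` form a well-ordered chain. If `a` is not `g`
itself, let `m` be the least element below `a` that is not below `g`. Since `m ≰ g`, `m` is not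
a lower bound of `A`, so some `b ∈ A` has `m ≰ b`. Any lower bound `x` of `{a, b}` with `x ≰ g`
would satisfy `m ≤ x ≤ b`, so `g` is the greatest lower bound of `{a, b}`. -/

open Set

section

variable {α : Type*} [PartialOrder α]

theorem IsTree.isChain_Iic (h : IsTree α) (a : α) : IsChain (· ≤ ·) (Iic a) := by
  intro x hx y hy hxy
  rcases (mem_Iic.1 hx).eq_or_lt with rfl | hxa
  · exact Or.inr hy
  rcases (mem_Iic.1 hy).eq_or_lt with rfl | hya
  · exact Or.inl hx
  by_contra! hincomp
  exact hxy <| congrArg Subtype.val <| (h a).trichotomous ⟨x, hxa⟩ ⟨y, hya⟩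
    (fun hlt => hincomp.1 hlt.le) (fun hlt => hincomp.2 hlt.le)

theorem IsTree.isWF_Iic (h : IsTree α) (a : α) : (Iic a).IsWF := by
  rw [← Iio_insert]
  exact IsWF.insert (h a).wf a

theorem exists_isGLB_pair_of_isChain_Iic {A : Set α} {a g : α}
    (hchain : IsChain (· ≤ ·) (Iic a)) (hwf : (Iic a).IsWF) (ha : a ∈ A) (hg : IsGLB A g) :
    ∃ b ∈ A, IsGLB {a, b} g := by
  by_cases hag : a ≤ g
  · refine ⟨a, ha, ?_⟩
    rw [pair_eq_singleton, le_antisymm hag (hg.1 ha)]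
    exact isGLB_singleton
  set X := {x | x ≤ a ∧ ¬x ≤ g}
  have hXwf : X.IsWF := hwf.mono fun x hx => hx.1
  have hXne : X.Nonempty := ⟨a, le_rfl, hag⟩
  set m := hXwf.min hXne
  obtain ⟨hma, hmg⟩ : m ∈ X := hXwf.min_mem hXne
  obtain ⟨b, hb, hmb⟩ : ∃ b ∈ A, ¬m ≤ b := by
    by_contra! hm
    exact hmg (hg.2 hm)
  refine ⟨b, hb, ?_, fun x hx => ?_⟩
  · rintro y (rfl | rfl)
    exacts [hg.1 ha, hg.1 hb]
  have hxa : x ≤ a := hx (mem_insert a {b})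
  have hxb : x ≤ b := hx (mem_insert_of_mem a rfl)
  by_contra hxg
  rcases hchain.total hma hxa with hmx | hxm
  · exact hmb (hmx.trans hxb)
  · obtain rfl : x = m := eq_of_le_of_not_lt hxm (hXwf.not_lt_min hXne ⟨hxa, hxg⟩)
    exact hmb hxb

end

theorem stmt_3 {α : Type*} [PartialOrder α] (htree : IsTree α)
    (A : Set α) (htwo : ∃ a ∈ A, ∃ b ∈ A, a ≠ b)
    (g : α) (hg : IsGLB A g) :
    ∃ a₁ ∈ A, ∃ a₂ ∈ A, IsGLB {a₁, a₂} g := by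
  obtain ⟨a, ha, -⟩ := htwo
  exact ⟨a, ha, exists_isGLB_pair_of_isChain_Iic (htree.isChain_Iic a) (htree.isWF_Iic a) ha hg⟩
end

section
/- Let T be a tree with the interval topology. A subset X ⊆ T is a countable union of antichains if and only if X is a countable union of subsets each of which is closed and discrete in T. -/
/-- The interval topology on a tree: generated by the half-open intervals
`(s, t]` together with the singletons of minimal elements. -/
def intervalTopology (α : Type*) [PartialOrder α] : TopologicalSpace α :=
  TopologicalSpace.generateFrom
    ({S | ∃ s t : α, s < t ∧ S = Set.Ioc s t} ∪
      {S | ∃ m : α, (∀ x : α, ¬ x < m) ∧ S = {m}})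

/-!
Antichains are closed and discrete: an antichain meets the neighbourhood `(s, x]` of `x` at most
in `x`, once `s` is taken to be the point of the antichain below `x` if there is one.
Conversely, a closed discrete `D` has only finitely many points below each `x`: otherwise take
`x` minimal with infinitely many; the points of `D` below `x` are comparable with any `s < x`
and only finitely many of them lie below `s`, so every `(s, x]` meets `D`, and `x` is an
accumulation point of `D`. Hence the levels `{x ∈ D | D has exactly k points below x}`, which
are antichains, cover `D`.
-/

section

open Filter Topology Set

variable {α : Type*}

def IsCountableUnionOf (P : Set α → Prop) (X : Set α) : Prop :=
  ∃ A : ℕ → Set α, (∀ n, P (A n)) ∧ X = ⋃ n, A n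

theorem IsCountableUnionOf.mono {P Q : Set α → Prop} {X : Set α} (hX : IsCountableUnionOf P X)
    (hPQ : ∀ S, P S → Q S) : IsCountableUnionOf Q X :=
  let ⟨A, hA, hX⟩ := hX
  ⟨A, fun n => hPQ _ (hA n), hX⟩

theorem IsCountableUnionOf.iUnion {P : Set α → Prop} {D : ℕ → Set α}
    (hD : ∀ n, IsCountableUnionOf P (D n)) : IsCountableUnionOf P (⋃ n, D n) := by
  choose A hA hDA using hD
  refine ⟨fun m => A m.unpair.1 m.unpair.2, fun m => hA _ _, ?_⟩
  rw [Set.iUnion_unpair (fun i j => A i j)]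
  simp only [hDA]

theorem isClosed_and_discreteTopology_iff_forall_not_accPt [TopologicalSpace α] {S : Set α} :
    IsClosed S ∧ DiscreteTopology S ↔ ∀ x, ¬AccPt x (𝓟 S) := by
  simp only [← isDiscrete_iff_discreteTopology, isClosed_and_discrete_iff, AccPt,
    disjoint_iff, ← not_neBot]

section PartialOrder

variable [PartialOrder α]

theorem isAntichain_setOf_ncard_inter_Iio_eq {D : Set α} (hD : ∀ x, (D ∩ Iio x).Finite)
    (k : ℕ) : IsAntichain (· ≤ ·) {x ∈ D | (D ∩ Iio x).ncard = k} := by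
  rintro x ⟨hxD, hx⟩ y ⟨-, hy⟩ hne hle
  have hlt : D ∩ Iio x ⊂ D ∩ Iio y :=
    ssubset_of_subset_of_ne (inter_subset_inter_right D (Iio_subset_Iio hle))
      fun h => (h ▸ ⟨hxD, lt_of_le_of_ne hle hne⟩ : x ∈ D ∩ Iio x).2.false
  exact (ncard_lt_ncard hlt (hD y)).ne (hx.trans hy.symm)

theorem isCountableUnionOf_isAntichain {D : Set α} (hD : ∀ x, (D ∩ Iio x).Finite) :
    IsCountableUnionOf (IsAntichain (· ≤ ·)) D :=
  ⟨fun k => {x ∈ D | (D ∩ Iio x).ncard = k}, isAntichain_setOf_ncard_inter_Iio_eq hD,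
    by ext x; simp⟩

theorem IsTree.le_or_le (h : IsTree α) {x y z : α} (hy : y ≤ x) (hz : z ≤ x) :
    y ≤ z ∨ z ≤ y := by
  rcases hy.eq_or_lt with rfl | hy
  · exact Or.inr hz
  rcases hz.eq_or_lt with rfl | hz
  · exact Or.inl hy.le
  have := h x
  rcases trichotomous_of (fun a b : {s // s < x} => (a : α) < b) ⟨y, hy⟩ ⟨z, hz⟩ with
    h | h | h
  · exact Or.inl h.le
  · exact Or.inl (congrArg Subtype.val h).le
  · exact Or.inr h.le

theorem IsTree.wellFoundedLT (h : IsTree α) : WellFoundedLT α := by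
  have hacc (x : α) (y : {s // s < x}) : Acc (· < ·) (y : α) :=
    (h x).wf.induction (C := fun y => Acc (· < ·) (y : α)) y fun z ih =>
      ⟨_, fun w hw => ih ⟨w, hw.trans z.2⟩ hw⟩
  exact ⟨⟨fun x => ⟨x, fun y hyx => hacc x ⟨y, hyx⟩⟩⟩⟩

theorem IsTree.exists_Ioc_subset_of_isOpen (htree : IsTree α) {V : Set α}
    (hV : IsOpen[intervalTopology α] V) {x : α} (hxV : x ∈ V) (hx : ¬IsMin x) :
    ∃ s < x, Ioc s x ⊆ V := by
  induction hV with
  | basic S hS =>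
    rcases hS with ⟨s, t, -, rfl⟩ | ⟨m, hm, rfl⟩
    · exact ⟨s, hxV.1, fun z hz => ⟨hz.1, hz.2.trans hxV.2⟩⟩
    · exact absurd (isMin_iff_forall_not_lt.mpr hm) (hxV ▸ hx)
  | univ =>
    obtain ⟨s, hs⟩ := not_isMin_iff.mp hx
    exact ⟨s, hs, subset_univ _⟩
  | inter V W _ _ ihV ihW =>
    obtain ⟨s, hs, hsV⟩ := ihV hxV.1
    obtain ⟨t, ht, htW⟩ := ihW hxV.2
    rcases htree.le_or_le hs.le ht.le with hst | hts
    · exact ⟨t, ht, subset_inter ((Ioc_subset_Ioc_left hst).trans hsV) htW⟩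
    · exact ⟨s, hs, subset_inter hsV ((Ioc_subset_Ioc_left hts).trans htW)⟩
  | sUnion S _ ih =>
    obtain ⟨V, hVS, hxV⟩ := hxV
    obtain ⟨s, hs, hsV⟩ := ih V hVS hxV
    exact ⟨s, hs, hsV.trans (subset_sUnion_of_mem hVS)⟩

variable [τ : TopologicalSpace α]

theorem nhds_eq_pure_of_isMin (hτ : τ = intervalTopology α) {m : α} (hm : IsMin m) :
    𝓝 m = pure m := by
  rw [← isOpen_singleton_iff_nhds_eq_pure, hτ]
  exact .basic _ (.inr ⟨m, isMin_iff_forall_not_lt.mp hm, rfl⟩)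

theorem Ioc_mem_nhds_right (hτ : τ = intervalTopology α) {s t : α} (h : s < t) :
    Ioc s t ∈ 𝓝 t := by
  refine IsOpen.mem_nhds ?_ ⟨h, le_rfl⟩
  rw [hτ]
  exact .basic _ (.inl ⟨s, t, h, rfl⟩)

theorem hasBasis_nhds_Ioc (hτ : τ = intervalTopology α) (htree : IsTree α) {x : α}
    (hx : ¬IsMin x) : (𝓝 x).HasBasis (· < x) (Ioc · x) := by
  refine ⟨fun U => ⟨fun hU => ?_, fun ⟨s, hs, hsU⟩ =>
    mem_of_superset (Ioc_mem_nhds_right hτ hs) hsU⟩⟩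
  obtain ⟨V, hVU, hV, hxV⟩ := mem_nhds_iff.mp hU
  obtain ⟨s, hs, hsV⟩ := htree.exists_Ioc_subset_of_isOpen (hτ ▸ hV) hxV hx
  exact ⟨s, hs, hsV.trans hVU⟩

theorem IsAntichain.not_accPt (hτ : τ = intervalTopology α) {A : Set α}
    (hA : IsAntichain (· ≤ ·) A) (x : α) : ¬AccPt x (𝓟 A) := by
  rw [accPt_iff_nhds]
  push Not
  by_cases hx : IsMin x
  · exact ⟨{x}, by rw [nhds_eq_pure_of_isMin hτ hx]; exact mem_pure.2 rfl, fun y hy => hy.1⟩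
  obtain ⟨s, hs, hsA⟩ : ∃ s < x, ∀ y ∈ A, s < y → ¬y < x := by
    by_cases h : ∃ y ∈ A, y < x
    · obtain ⟨s, hsA, hs⟩ := h
      exact ⟨s, hs, fun y hyA hsy _ => hA hsA hyA hsy.ne hsy.le⟩
    · push Not at h
      obtain ⟨s, hs⟩ := not_isMin_iff.mp hx
      exact ⟨s, hs, fun y hyA _ => h y hyA⟩
  exact ⟨Ioc s x, Ioc_mem_nhds_right hτ hs, fun y ⟨⟨hsy, hyx⟩, hyA⟩ =>
    hyx.eq_or_lt.resolve_right (hsA y hyA hsy)⟩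

theorem IsTree.accPt_of_infinite_inter_Iio (hτ : τ = intervalTopology α) (htree : IsTree α)
    {D : Set α} {x : α} (hx : (D ∩ Iio x).Infinite) (hlt : ∀ y < x, (D ∩ Iio y).Finite) :
    AccPt x (𝓟 D) := by
  have hxmin : ¬IsMin x := fun hm => hx (by simp [hm.Iio_eq])
  rw [accPt_iff_nhds]
  intro U hU
  obtain ⟨s, hs, hsU⟩ := (hasBasis_nhds_Ioc hτ htree hxmin).mem_iff.mp hU
  have hfin : (D ∩ Iic s).Finite :=
    ((hlt s hs).insert s).subset fun y ⟨hyD, hys⟩ => hys.eq_or_lt.imp id fun h => ⟨hyD, h⟩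
  obtain ⟨y, ⟨hyD, hyx⟩, hys⟩ := (hx.sdiff hfin).nonempty
  have hsy : s < y := (htree.le_or_le hyx.le hs.le).elim (fun h => absurd ⟨hyD, h⟩ hys)
    fun h => h.lt_of_ne fun h => hys ⟨hyD, h.ge⟩
  exact ⟨y, ⟨hsU ⟨hsy, hyx.le⟩, hyD⟩, hyx.ne⟩

theorem IsTree.finite_inter_Iio (hτ : τ = intervalTopology α) (htree : IsTree α) {D : Set α}
    (hD : IsClosed D ∧ DiscreteTopology D) (x : α) : (D ∩ Iio x).Finite := by
  have := htree.wellFoundedLT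
  induction x using WellFoundedLT.induction with
  | _ x ih =>
    by_contra hx
    exact isClosed_and_discreteTopology_iff_forall_not_accPt.1 hD x
      (htree.accPt_of_infinite_inter_Iio hτ hx ih)

end PartialOrder

end

theorem stmt_6_general {α : Type*} [PartialOrder α] [τ : TopologicalSpace α]
    (hτ : τ = intervalTopology α) (htree : IsTree α)
    (X : Set α) :
    (∃ A : ℕ → Set α, (∀ n, IsAntichain (· ≤ ·) (A n)) ∧ X = ⋃ n, A n) ↔
      (∃ D : ℕ → Set α, (∀ n, IsClosed (D n) ∧ DiscreteTopology (D n)) ∧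
        X = ⋃ n, D n) := by
  refine ⟨fun h => IsCountableUnionOf.mono h fun A hA =>
    isClosed_and_discreteTopology_iff_forall_not_accPt.2 (hA.not_accPt hτ), ?_⟩
  rintro ⟨D, hD, rfl⟩
  exact IsCountableUnionOf.iUnion fun n =>
    isCountableUnionOf_isAntichain (htree.finite_inter_Iio hτ (hD n))

theorem stmt_6 {α : Type*} [PartialOrder α] [τ : TopologicalSpace α]
    (hτ : τ = intervalTopology α) (htree : IsTree α)
    (hsup : ∀ C : Set α, C.Nonempty → IsChain (· ≤ ·) C →
      (∃ b, b ∈ upperBounds C) → ∃ s, IsLUB C s)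
    (X : Set α) :
    (∃ A : ℕ → Set α, (∀ n, IsAntichain (· ≤ ·) (A n)) ∧ X = ⋃ n, A n) ↔
      (∃ D : ℕ → Set α, (∀ n, IsClosed (D n) ∧ DiscreteTopology (D n)) ∧
        X = ⋃ n, D n) :=
  stmt_6_general (τ := τ) hτ htree X
end

section
/- Every closed discrete subspace D of a tree T (with the interval topology) is a countable union of antichains; specifically, defining D₀ to be the minimal elements of D and D_{n+1} the minimal elements of D ∖ (D₀ ∪ ⋯ ∪ D_n), every element of D lies in some D_n. -/
/-- The minimal elements of a subset `S`. -/
def minimalsOf {α : Type*} [PartialOrder α] (S : Set α) : Set α :=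
  {x ∈ S | ∀ y ∈ S, ¬ y < x}

/-- `residualSet D n` is what remains of `D` after removing the first `n` layers
of minimal elements. -/
def residualSet {α : Type*} [PartialOrder α] (D : Set α) : ℕ → Set α
  | 0 => D
  | n + 1 => residualSet D n \ minimalsOf (residualSet D n)

/-- `layer D n` is the set `Dₙ`: the minimal elements of
`D ∖ (D₀ ∪ ⋯ ∪ D_{n-1})`. -/
def layer {α : Type*} [PartialOrder α] (D : Set α) (n : ℕ) : Set α :=
  minimalsOf (residualSet D n)

open Filter Set Topology

section

variable {α : Type*} [PartialOrder α]

theorem isAntichain_minimalsOf (S : Set α) : IsAntichain (· ≤ ·) (minimalsOf S) :=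
  fun x hx _ hy hne hle => hy.2 x hx.1 (lt_of_le_of_ne hle hne)

theorem residualSet_subset (D : Set α) : ∀ n, residualSet D n ⊆ D
  | 0 => subset_rfl
  | n + 1 => sdiff_subset.trans (residualSet_subset D n)

theorem mem_residualSet_of_forall_not_mem_layer {D : Set α} {d : α} (hd : d ∈ D)
    (h : ∀ n, d ∉ layer D n) : ∀ n, d ∈ residualSet D n
  | 0 => hd
  | n + 1 => ⟨mem_residualSet_of_forall_not_mem_layer hd h n, h n⟩

theorem lt_of_mem_layer_of_mem_residualSet_succ {D : Set α} {n : ℕ} {x y : α}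
    (hx : x ∈ layer D n) (hy : y ∈ residualSet D (n + 1)) (hxy : x ≤ y ∨ y ≤ x) : x < y := by
  have hne : x ≠ y := fun h => hy.2 (h ▸ hx)
  rcases hxy with hxy | hyx
  · exact lt_of_le_of_ne hxy hne
  · exact absurd (lt_of_le_of_ne hyx hne.symm) (hx.2 y hy.1)

namespace IsTree

theorem le_or_le_of_lt (h : IsTree α) {a b t : α} (ha : a < t) (hb : b < t) :
    a ≤ b ∨ b ≤ a := by
  have := h t
  rcases trichotomous_of (fun x y : {s // s < t} => (x : α) < y) ⟨a, ha⟩ ⟨b, hb⟩ with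
    hab | hab | hba
  · exact Or.inl hab.le
  · exact Or.inl (congrArg Subtype.val hab).le
  · exact Or.inr hba.le

theorem exists_mem_minimalsOf_lt (h : IsTree α) {S : Set α} {d : α} (hd : d ∈ S)
    (hmin : d ∉ minimalsOf S) : ∃ x ∈ minimalsOf S, x < d := by
  obtain ⟨y, hyS, hyd⟩ : ∃ y ∈ S, y < d := by
    simpa [minimalsOf, hd] using hmin
  obtain ⟨⟨x, hxd⟩, hxS, hx⟩ :=
    (h d).wf.has_min {z : {s // s < d} | (z : α) ∈ S} ⟨⟨y, hyd⟩, hyS⟩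
  exact ⟨x, ⟨hxS, fun z hzS hzx => hx ⟨z, hzx.trans hxd⟩ hzS hzx⟩, hxd⟩

theorem exists_strictMono_mem_layer_lt (h : IsTree α) {D : Set α} {d : α} (hd : d ∈ D)
    (hnot : ∀ n, d ∉ layer D n) :
    ∃ u : ℕ → α, (∀ n, u n ∈ layer D n) ∧ (∀ n, u n < d) ∧ StrictMono u := by
  have hres := mem_residualSet_of_forall_not_mem_layer hd hnot
  choose u hu hud using fun n => h.exists_mem_minimalsOf_lt (hres n) (hnot n)
  refine ⟨u, hu, hud, strictMono_nat_of_lt_succ fun n => ?_⟩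
  exact lt_of_mem_layer_of_mem_residualSet_succ (hu n) (hu (n + 1)).1
    (h.le_or_le_of_lt (hud n) (hud (n + 1)))

/-- A basic neighbourhood `(a, b]` of `s` has `a < s`, and `a`, being comparable with every
`uₙ < s`, cannot bound them all. -/
theorem tendsto_nhds_of_isLUB_range (h : IsTree α) {u : ℕ → α} {s : α} (hu : Monotone u)
    (hus : ∀ n, u n < s) (hs : IsLUB (range u) s) :
    Tendsto u atTop (@nhds α (intervalTopology α) s) := by
  rw [intervalTopology, TopologicalSpace.nhds_generateFrom]
  simp only [tendsto_iInf, tendsto_principal]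
  rintro V ⟨hsV, ⟨a, b, -, rfl⟩ | ⟨m, hm, rfl⟩⟩
  · obtain ⟨has, hsb⟩ := hsV
    obtain ⟨N, hN⟩ : ∃ N, a < u N := by
      by_contra! hle
      have hub : s ≤ a := hs.2 <| forall_mem_range.2 fun n =>
        (h.le_or_le_of_lt (hus n) has).elim id fun hau => (eq_of_le_of_not_lt hau (hle n)).ge
      exact hub.not_gt has
    exact eventually_atTop.2 ⟨N, fun n hn => ⟨hN.trans_le (hu hn), (hus n).le.trans hsb⟩⟩
  · exact absurd (hsV ▸ hus 0) (hm _)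

end IsTree

theorem not_tendsto_of_isClosed_of_discreteTopology {X : Type*} [TopologicalSpace X]
    {D : Set X} (hDc : IsClosed D) (hDd : DiscreteTopology D) {u : ℕ → X} {s : X}
    (huD : ∀ n, u n ∈ D) (hus : ∀ n, u n ≠ s) : ¬ Tendsto u atTop (𝓝 s) := by
  intro hlim
  have hsD : s ∈ D := hDc.mem_of_tendsto hlim (Eventually.of_forall huD)
  have hbot := discreteTopology_subtype_iff.1 hDd s hsD
  have : Tendsto u atTop (𝓝[≠] s ⊓ 𝓟 D) :=
    tendsto_inf.2 ⟨tendsto_nhdsWithin_iff.2 ⟨hlim, Eventually.of_forall hus⟩,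
      tendsto_principal.2 (Eventually.of_forall huD)⟩
  rw [hbot] at this
  exact this.neBot.ne rfl

end

theorem stmt_7 {α : Type*} [PartialOrder α] [τ : TopologicalSpace α]
    (hτ : τ = intervalTopology α) (htree : IsTree α)
    (hsup : ∀ C : Set α, C.Nonempty → IsChain (· ≤ ·) C →
      (∃ b, b ∈ upperBounds C) → ∃ s, IsLUB C s)
    (D : Set α) (hDc : IsClosed D) (hDd : DiscreteTopology D) :
    (∀ n, IsAntichain (· ≤ ·) (layer D n)) ∧ (∀ d ∈ D, ∃ n, d ∈ layer D n) := by
  subst hτ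
  let _ := intervalTopology α
  refine ⟨fun n => isAntichain_minimalsOf _, fun d hd => ?_⟩
  by_contra! hnot
  obtain ⟨u, hu, hud, hmono⟩ := htree.exists_strictMono_mem_layer_lt hd hnot
  obtain ⟨s, hs⟩ := hsup (range u) (range_nonempty u) hmono.monotone.isChain_range
    ⟨d, forall_mem_range.2 fun n => (hud n).le⟩
  have hus : ∀ n, u n < s := fun n => (hmono n.lt_succ_self).trans_le (hs.1 ⟨n + 1, rfl⟩)
  exact not_tendsto_of_isClosed_of_discreteTopology hDc hDd
    (fun n => residualSet_subset D n (hu n).1) (fun n => (hus n).ne)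
    (htree.tendsto_nhds_of_isLUB_range hmono.monotone hus hs)
end

section
/- A tree T admits a strictly order-preserving map into the rationals ℚ if and only if T is a countable union of antichains. -/
private lemma tail_sum_lt (d : ℕ) (F : Finset ℕ) (hF : ∀ n ∈ F, d < n) :
    ∑ n ∈ F, ((2:ℚ)⁻¹)^n < ((2:ℚ)⁻¹)^d := by
  rcases F.eq_empty_or_nonempty with rfl | hne
  · simp only [Finset.sum_empty]
    positivity
  · set M := F.sup id + 1 with hM
    have hsub : F ⊆ Finset.Ico (d+1) M := by
      intro n hn
      exact Finset.mem_Ico.2 ⟨hF n hn, Nat.lt_succ_of_le (Finset.le_sup (f := id) hn)⟩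
    have h1 : ∑ n ∈ F, ((2:ℚ)⁻¹)^n ≤ ∑ n ∈ Finset.Ico (d+1) M, ((2:ℚ)⁻¹)^n :=
      Finset.sum_le_sum_of_subset_of_nonneg hsub (by intros; positivity)
    have hdM : d + 1 ≤ M := by
      obtain ⟨n, hn⟩ := hne
      have h2 : n ≤ F.sup id := Finset.le_sup (f := id) hn
      have h3 : d < n := hF n hn
      omega
    have h2 : ∑ n ∈ Finset.Ico (d+1) M, ((2:ℚ)⁻¹)^n
        = (((2:ℚ)⁻¹)^M - ((2:ℚ)⁻¹)^(d+1)) / ((2:ℚ)⁻¹ - 1) :=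
      geom_sum_Ico (by norm_num) hdM
    have hMpos : (0:ℚ) < ((2:ℚ)⁻¹)^M := by positivity
    have hsucc : ((2:ℚ)⁻¹)^(d+1) = (2:ℚ)⁻¹ * ((2:ℚ)⁻¹)^d := by
      rw [pow_succ]; ring
    have h3 : (((2:ℚ)⁻¹)^M - ((2:ℚ)⁻¹)^(d+1)) / ((2:ℚ)⁻¹ - 1) < ((2:ℚ)⁻¹)^d := by
      rw [div_lt_iff_of_neg (by norm_num)]
      nlinarith [hMpos, hsucc]
    calc ∑ n ∈ F, ((2:ℚ)⁻¹)^n ≤ ∑ n ∈ Finset.Ico (d+1) M, ((2:ℚ)⁻¹)^n := h1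
      _ = (((2:ℚ)⁻¹)^M - ((2:ℚ)⁻¹)^(d+1)) / ((2:ℚ)⁻¹ - 1) := h2
      _ < ((2:ℚ)⁻¹)^d := h3

private lemma binary_lt (F G : Finset ℕ) (d : ℕ) (hdG : d ∈ G) (hdF : d ∉ F)
    (hlt : ∀ k < d, (k ∈ F ↔ k ∈ G)) :
    ∑ n ∈ F, ((2:ℚ)⁻¹)^n < ∑ n ∈ G, ((2:ℚ)⁻¹)^n := by
  classical
  have hFsplit := Finset.sum_filter_add_sum_filter_not F (fun n => n < d)
    (fun n => ((2:ℚ)⁻¹)^n)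
  have hGsplit := Finset.sum_filter_add_sum_filter_not G (fun n => n < d)
    (fun n => ((2:ℚ)⁻¹)^n)
  have hfilter_eq : F.filter (fun n => n < d) = G.filter (fun n => n < d) := by
    ext k
    simp only [Finset.mem_filter]
    constructor
    · rintro ⟨h1, h2⟩; exact ⟨(hlt k h2).mp h1, h2⟩
    · rintro ⟨h1, h2⟩; exact ⟨(hlt k h2).mpr h1, h2⟩
  have htail : ∑ n ∈ F.filter (fun n => ¬ n < d), ((2:ℚ)⁻¹)^n < ((2:ℚ)⁻¹)^d := by
    apply tail_sum_lt
    intro n hn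
    rcases Finset.mem_filter.1 hn with ⟨hnF, hnd⟩
    have h1 : d ≤ n := Nat.not_lt.mp hnd
    have h2 : d ≠ n := by rintro rfl; exact hdF hnF
    omega
  have hG2 : ((2:ℚ)⁻¹)^d ≤ ∑ n ∈ G.filter (fun n => ¬ n < d), ((2:ℚ)⁻¹)^n :=
    Finset.single_le_sum (f := fun n => ((2:ℚ)⁻¹)^n) (by intros; positivity)
      (Finset.mem_filter.2 ⟨hdG, lt_irrefl d⟩)
  rw [hfilter_eq] at hFsplit
  linarith

theorem stmt_8 {α : Type*} [PartialOrder α] (htree : IsTree α) :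
    (∃ f : α → ℚ, StrictMono f) ↔
      (∃ A : ℕ → Set α, (∀ n, IsAntichain (· ≤ ·) (A n)) ∧
        (⋃ n, A n) = Set.univ) := by
  classical
  constructor
  · rintro ⟨f, hf⟩
    refine ⟨fun n => f ⁻¹' {(Denumerable.eqv ℚ).symm n}, fun n => ?_, ?_⟩
    · intro a ha b hb hne hle
      have hab : a < b := lt_of_le_of_ne hle hne
      have h2 := hf hab
      rw [Set.mem_preimage, Set.mem_singleton_iff] at ha hb
      rw [ha, hb] at h2
      exact lt_irrefl _ h2
    · ext a
      simp only [Set.mem_iUnion, Set.mem_preimage, Set.mem_singleton_iff, Set.mem_univ,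
        iff_true]
      exact ⟨(Denumerable.eqv ℚ) (f a), ((Denumerable.eqv ℚ).symm_apply_apply (f a)).symm⟩
  · rintro ⟨A, hanti, hcov⟩
    have hmem : ∀ a : α, ∃ n, a ∈ A n := by
      intro a
      have : a ∈ ⋃ n, A n := hcov ▸ Set.mem_univ a
      exact Set.mem_iUnion.mp this
    set g : α → ℕ := fun a => Nat.find (hmem a) with hg
    have hgA : ∀ a, a ∈ A (g a) := fun a => Nat.find_spec (hmem a)
    have hginj : ∀ a b : α, a < b → g a ≠ g b := by
      intro a b hab heq
      exact hanti (g b) (heq ▸ hgA a) (hgA b) (ne_of_lt hab) hab.le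
    set E : α → Finset ℕ :=
      fun t => (Finset.range (g t + 1)).filter (fun n => ∃ s ≤ t, g s = n) with hE
    have hmemE : ∀ t n, n ∈ E t ↔ (n ≤ g t ∧ ∃ s ≤ t, g s = n) := by
      intro t n
      simp only [hE, Finset.mem_filter, Finset.mem_range, Nat.lt_succ_iff]
    refine ⟨fun t => ∑ n ∈ E t, ((2:ℚ)⁻¹)^n, ?_⟩
    intro s t hst
    have hgt_mem : g t ∈ E t := (hmemE t (g t)).2 ⟨le_rfl, t, le_rfl, rfl⟩
    have hgt_not : g t ∉ E s := by
      intro h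
      obtain ⟨-, x, hxs, hxg⟩ := (hmemE s (g t)).1 h
      exact hginj x t (lt_of_le_of_lt hxs hst) hxg
    have hex : ∃ k, ¬ (k ∈ E s ↔ k ∈ E t) := ⟨g t, fun h => hgt_not (h.mpr hgt_mem)⟩
    set d := Nat.find hex with hd
    have hdspec : ¬ (d ∈ E s ↔ d ∈ E t) := Nat.find_spec hex
    have hdmin : ∀ k < d, (k ∈ E s ↔ k ∈ E t) := fun k hk =>
      not_not.mp (Nat.find_min hex hk)
    have hdG : d ∈ E t ∧ d ∉ E s := by
      by_cases h1 : d ∈ E s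
      · exfalso
        have h2 : d ∉ E t := fun h => hdspec ⟨fun _ => h, fun _ => h1⟩
        obtain ⟨hds, x, hxs, hxd⟩ := (hmemE s d).1 h1
        have hxt : x ≤ t := hxs.trans hst.le
        have hgtd : g t < d := by
          by_contra h
          exact h2 ((hmemE t d).2 ⟨Nat.not_lt.mp h, x, hxt, hxd⟩)
        exact hgt_not ((hdmin (g t) hgtd).mpr hgt_mem)
      · have h2 : d ∈ E t := by
          by_contra h
          exact hdspec ⟨fun hh => absurd hh h1, fun hh => absurd hh h⟩
        exact ⟨h2, h1⟩
    exact binary_lt (E s) (E t) d hdG.1 hdG.2 hdmin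
end

section
/- Let T be a tree, with the interval topology. If every countable antichain of T can be expanded to a discrete collection of open sets, and T is normal, then T is countably paracompact in the sense restricted in Theorem 4.20; in particular, every normal tree is countably paracompact (there are no Dowker trees), granting that countable paracompactness of T is equivalent to: every countable partition {A_n : n ∈ ω} of any antichain of T expands to a locally finite collection of open sets. -/
open Set

/-- A space is countably paracompact if every countable open cover has a
locally finite open refinement (which still covers). -/
def CountablyParacompact (α : Type*) [TopologicalSpace α] : Prop :=
  ∀ u : ℕ → Set α, (∀ n, IsOpen (u n)) → (⋃ n, u n) = Set.univ →
    ∃ v : Set (Set α), (∀ V ∈ v, IsOpen V) ∧ ⋃₀ v = Set.univ ∧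
      (∀ V ∈ v, ∃ n, V ⊆ u n) ∧ LocallyFinite (fun V : v => (V : Set α))

/-- Every countable partition of every antichain of the space expands to a
locally finite family of open sets. -/
def PartitionsExpandLocallyFinite (α : Type*) [PartialOrder α]
    [TopologicalSpace α] : Prop :=
  ∀ A : Set α, IsAntichain (· ≤ ·) A →
    ∀ B : ℕ → Set α, (⋃ n, B n) = A → Pairwise (Function.onFun Disjoint B) →
      ∃ U : ℕ → Set α, (∀ n, IsOpen (U n) ∧ B n ⊆ U n) ∧
        (∀ m n, m ≠ n → B m ∩ U n = ∅) ∧ LocallyFinite U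

/-- The family `U` (indexed by the points of `A`) is a discrete family:
every point of the space has a neighborhood meeting `U a` for at most one
`a ∈ A`. -/
def IsDiscreteExpansion {α : Type*} [TopologicalSpace α] (A : Set α)
    (U : α → Set α) : Prop :=
  (∀ a ∈ A, IsOpen (U a) ∧ a ∈ U a ∧ U a ∩ A = {a}) ∧
    ∀ x : α, ∃ N ∈ nhds x, {a | a ∈ A ∧ (U a ∩ N).Nonempty}.Subsingleton

theorem stmt_12 {α : Type*} [PartialOrder α] [τ : TopologicalSpace α]
    (hτ : τ = intervalTopology α) (htree : IsTree α)
    (hnormal : NormalSpace α)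
    (hexp : ∀ A : Set α, IsAntichain (· ≤ ·) A → A.Countable →
      ∃ U : α → Set α, IsDiscreteExpansion A U)
    (h420 : CountablyParacompact α ↔ PartitionsExpandLocallyFinite α) :
    CountablyParacompact α := by
  rw [h420]
  subst hτ
  letI : TopologicalSpace α := intervalTopology α
  intro A hA B hBA hBdisj
  -- basic open sets
  have hopen_Ioc : ∀ s t : α, s < t → IsOpen (Set.Ioc s t) := fun s t hst =>
    TopologicalSpace.isOpen_generateFrom_of_mem (Or.inl ⟨s, t, hst, rfl⟩)
  have hopen_min : ∀ m : α, (∀ x : α, ¬ x < m) → IsOpen ({m} : Set α) := fun m hm =>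
    TopologicalSpace.isOpen_generateFrom_of_mem (Or.inr ⟨m, hm, rfl⟩)
  -- key: every point has an open neighborhood meeting A in at most itself
  have key : ∀ x : α, ∃ N : Set α, IsOpen N ∧ x ∈ N ∧ N ∩ A ⊆ {x} := by
    intro x
    by_cases hmin : ∀ y : α, ¬ y < x
    · exact ⟨{x}, hopen_min x hmin, rfl, fun y hy => hy.1⟩
    · push_neg at hmin
      obtain ⟨t0, ht0⟩ := hmin
      by_cases ha : ∃ a ∈ A, a < x
      · obtain ⟨a, haA, hax⟩ := ha
        refine ⟨Set.Ioc a x, hopen_Ioc a x hax, ⟨hax, le_refl x⟩, ?_⟩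
        rintro y ⟨⟨hay, hyx⟩, hyA⟩
        exact absurd (hA haA hyA (ne_of_lt hay) (le_of_lt hay)) (fun h => h)
      · push_neg at ha
        refine ⟨Set.Ioc t0 x, hopen_Ioc t0 x ht0, ⟨ht0, le_refl x⟩, ?_⟩
        rintro y ⟨⟨_, hyx⟩, hyA⟩
        rcases eq_or_lt_of_le hyx with h | h
        · exact h
        · exact absurd h (ha y hyA)
  -- every subset of A is closed
  have hclosed : ∀ S : Set α, S ⊆ A → IsClosed S := by
    intro S hS
    rw [← isOpen_compl_iff]
    rw [isOpen_iff_forall_mem_open]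
    intro x hx
    obtain ⟨N, hNopen, hxN, hNA⟩ := key x
    refine ⟨N, ?_, hNopen, hxN⟩
    intro y hy hyS
    have : y = x := hNA ⟨hy, hS hyS⟩
    exact hx (this ▸ hyS)
  have hBsubA : ∀ n, B n ⊆ A := by
    intro n
    rw [← hBA]; exact Set.subset_iUnion B n
  -- separating open sets from normality
  have hG : ∀ n : ℕ, ∃ G : Set α, IsOpen G ∧ B n ⊆ G ∧ closure G ∩ (A \ B n) = ∅ := by
    intro n
    have h1 : IsClosed (B n) := hclosed (B n) (hBsubA n)
    have h2 : IsClosed (A \ B n) := hclosed (A \ B n) (Set.diff_subset)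
    have hdisj : Disjoint (B n) (A \ B n) := Set.disjoint_sdiff_right
    obtain ⟨u, v, hu, hv, hsu, hsv, huv⟩ := hnormal.normal (B n) (A \ B n) h1 h2 hdisj
    refine ⟨u, hu, hsu, ?_⟩
    have hcl : closure u ⊆ vᶜ := by
      apply closure_minimal _ hv.isClosed_compl
      exact Set.disjoint_left.mp huv
    apply Set.eq_empty_iff_forall_notMem.mpr
    rintro y ⟨hy1, hy2⟩
    exact hcl hy1 (hsv hy2)
  choose G hGopen hGsub hGcl using hG
  -- the disjointified open expansion
  set U : ℕ → Set α := fun n => G n \ ⋃ m ∈ Finset.range n, closure (G m) with hUdef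
  have hUopen : ∀ n, IsOpen (U n) := by
    intro n
    apply (hGopen n).sdiff
    exact (Finset.range n).finite_toSet.isClosed_biUnion (fun m _ => isClosed_closure)
  have hUGsub : ∀ n, U n ⊆ G n := fun n => Set.diff_subset
  have hBU : ∀ n, B n ⊆ U n := by
    intro n b hb
    refine ⟨hGsub n hb, ?_⟩
    intro hmem
    simp only [Set.mem_iUnion, Finset.mem_range] at hmem
    obtain ⟨m, hmn, hbm⟩ := hmem
    have hbA : b ∈ A := hBsubA n hb
    have hbBm : b ∉ B m := by
      intro hbBm
      exact Set.disjoint_left.mp (hBdisj (Nat.ne_of_lt hmn).symm) hb hbBm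
    exact Set.eq_empty_iff_forall_notMem.mp (hGcl m) b ⟨hbm, hbA, hbBm⟩
  have hUdisj : ∀ m n : ℕ, m < n → Disjoint (U m) (U n) := by
    intro m n hmn
    rw [Set.disjoint_left]
    intro x hxm hxn
    apply hxn.2
    simp only [Set.mem_iUnion, Finset.mem_range]
    exact ⟨m, hmn, subset_closure hxm.1⟩
  have hUdisj' : ∀ m n : ℕ, m ≠ n → Disjoint (U m) (U n) := by
    intro m n hmn
    rcases lt_or_gt_of_ne hmn with h | h
    · exact hUdisj m n h
    · exact (hUdisj n m h).symm
  -- shrink with a closed neighborhood of A inside the union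
  have hAclosed : IsClosed A := hclosed A (subset_refl A)
  have hAsubU : A ⊆ ⋃ n, U n := by
    intro a ha
    rw [← hBA] at ha
    obtain ⟨n, hn⟩ := Set.mem_iUnion.mp ha
    exact Set.mem_iUnion.mpr ⟨n, hBU n hn⟩
  obtain ⟨W, hWopen, hAW, hclW⟩ :=
    normal_exists_closure_subset hAclosed (isOpen_iUnion hUopen) hAsubU
  refine ⟨fun n => U n ∩ W, ?_, ?_, ?_⟩
  · intro n
    refine ⟨(hUopen n).inter hWopen, fun b hb => ⟨hBU n hb, hAW (hBsubA n hb)⟩⟩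
  · intro m n hmn
    apply Set.eq_empty_iff_forall_notMem.mpr
    rintro b ⟨hbm, hbn, _⟩
    have hbA : b ∈ A := hBsubA m hbm
    have hbBn : b ∉ B n := fun h => Set.disjoint_left.mp (hBdisj hmn) hbm h
    exact Set.eq_empty_iff_forall_notMem.mp (hGcl n) b
      ⟨subset_closure (hUGsub n hbn), hbA, hbBn⟩
  · intro x
    by_cases hx : x ∈ closure W
    · obtain ⟨m, hm⟩ := Set.mem_iUnion.mp (hclW hx)
      refine ⟨U m, (hUopen m).mem_nhds hm, ?_⟩
      apply Set.Finite.subset (Set.finite_singleton m)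
      intro n hn
      obtain ⟨y, ⟨hy1, _⟩, hy2⟩ := hn
      by_contra hne
      exact Set.disjoint_left.mp (hUdisj' n m hne) hy1 hy2
    · refine ⟨(closure W)ᶜ, (isClosed_closure.isOpen_compl).mem_nhds hx, ?_⟩
      apply Set.Finite.subset Set.finite_empty
      intro n hn
      obtain ⟨y, ⟨_, hy1⟩, hy2⟩ := hn
      exact absurd (subset_closure hy1) hy2
end

section
/- Let T be a tree that is branch-complete (every maximal chain has a greatest element) and rooted. Then with the coarse wedge topology, T is compact. (Via Alexander's subbase lemma applied to the subbase of wedges V_t = {x : x ≥ t} with t minimal or of successor height, and their complements.) -/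
/-- `t` is minimal (height 0) or lies on a successor level, i.e. its
(well-ordered) set of strict predecessors is empty or has a greatest
element (an immediate predecessor). -/
def MinimalOrSuccessorLevel {α : Type*} [PartialOrder α] (t : α) : Prop :=
  (∀ s : α, ¬ s < t) ∨ ∃ p : α, p < t ∧ ∀ s : α, s < t → s ≤ p

/-- The coarse wedge topology: generated by the subbase of all wedges
`V t = Ici t` and their complements, for `t` minimal or on a successor
level. -/
def coarseWedgeTopology (α : Type*) [PartialOrder α] : TopologicalSpace α :=
  TopologicalSpace.generateFrom
    {S | ∃ t : α, MinimalOrSuccessorLevel t ∧ (S = Set.Ici t ∨ S = (Set.Ici t)ᶜ)}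

section

variable {α : Type*} [PartialOrder α]

lemma IsTree.le_total_of_le (htree : IsTree α) {a b x : α} (ha : a ≤ x) (hb : b ≤ x) :
    a ≤ b ∨ b ≤ a := by
  rcases ha.eq_or_lt with rfl | hax
  · exact Or.inr hb
  rcases hb.eq_or_lt with rfl | hbx
  · exact Or.inl ha
  have := htree x
  rcases trichotomous_of (fun a b : {s // s < x} => (a : α) < b) ⟨a, hax⟩ ⟨b, hbx⟩ with
    h | h | h
  · exact Or.inl h.le
  · exact Or.inl (congrArg Subtype.val h).le
  · exact Or.inr h.le

lemma IsTree.isChain_setOf_Ici_mem (htree : IsTree α) (F : Ultrafilter α) :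
    IsChain (· ≤ ·) {t | Set.Ici t ∈ F} := by
  intro a ha b hb _
  obtain ⟨x, hax, hbx⟩ := F.nonempty_of_mem (Filter.inter_mem ha hb)
  exact htree.le_total_of_le hax hbx

lemma bddAbove_of_isChain
    (hbc : ∀ B : Set α, IsChain (· ≤ ·) B →
      (∀ C : Set α, IsChain (· ≤ ·) C → B ⊆ C → B = C) → ∃ m ∈ B, ∀ b ∈ B, b ≤ m)
    {D : Set α} (hD : IsChain (· ≤ ·) D) : BddAbove D := by
  obtain ⟨M, hM, hDM⟩ := hD.exists_maxChain
  obtain ⟨m, -, hm⟩ := hbc M hM.1 fun C hC hMC => hM.2 hC hMC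
  exact ⟨m, fun d hd => hm d (hDM hd)⟩

lemma IsTree.exists_mem_le_of_le_isLUB (htree : IsTree α) {s u : α} {D : Set α}
    (hne : D.Nonempty) (hs : IsLUB D s)
    (hu : MinimalOrSuccessorLevel u) (hus : u ≤ s) : ∃ d ∈ D, u ≤ d := by
  by_contra! hD
  have hlt : ∀ d ∈ D, d < u := fun d hd =>
    ((htree.le_total_of_le (hs.1 hd) hus).resolve_right (hD d hd)).lt_of_not_ge (hD d hd)
  obtain ⟨r, hrD⟩ := hne
  rcases hu with hmin | ⟨p, hpu, hp⟩
  · exact hmin r (hlt r hrD)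
  · exact hpu.not_ge (hus.trans (hs.2 fun d hd => hp d (hlt d hd)))

lemma IsTree.ultrafilter_le_nhds_of_isLUB (htree : IsTree α) {s : α} (F : Ultrafilter α)
    (hne : {t | Set.Ici t ∈ F}.Nonempty) (hs : IsLUB {t | Set.Ici t ∈ F} s) :
    (F : Filter α) ≤ @nhds α (coarseWedgeTopology α) s := by
  rw [← Filter.tendsto_id', coarseWedgeTopology, TopologicalSpace.tendsto_nhds_generateFrom_iff]
  rintro _ ⟨u, hu, rfl | rfl⟩ hsu
  · obtain ⟨d, hd, hud⟩ := htree.exists_mem_le_of_le_isLUB hne hs hu hsu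
    exact Filter.mem_of_superset hd (Set.Ici_subset_Ici.mpr hud)
  · exact Ultrafilter.compl_mem_iff_notMem.mpr fun huF => hsu (hs.1 huF)

end

theorem stmt_16 {α : Type*} [PartialOrder α] [τ : TopologicalSpace α]
    (hτ : τ = coarseWedgeTopology α) (htree : IsTree α)
    (hsup : ∀ C : Set α, C.Nonempty → IsChain (· ≤ ·) C →
      (∃ b, b ∈ upperBounds C) → ∃ s, IsLUB C s)
    (hroot : ∃ r : α, ∀ t : α, r ≤ t)
    (hbc : ∀ B : Set α, IsChain (· ≤ ·) B →
      (∀ C : Set α, IsChain (· ≤ ·) C → B ⊆ C → B = C) →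
      ∃ m ∈ B, ∀ b ∈ B, b ≤ m) :
    CompactSpace α := by
  subst hτ
  obtain ⟨r, hr⟩ := hroot
  let := coarseWedgeTopology α
  refine ⟨isCompact_iff_ultrafilter_le_nhds.mpr fun F _ => ?_⟩
  have hne : {t | Set.Ici t ∈ F}.Nonempty := ⟨r, Filter.univ_mem' hr⟩
  have hchain := htree.isChain_setOf_Ici_mem F
  obtain ⟨s, hs⟩ := hsup _ hne hchain (bddAbove_of_isChain hbc hchain)
  exact ⟨s, Set.mem_univ s, htree.ultrafilter_le_nhds_of_isLUB F hne hs⟩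
end

section
/- Every tree with the fine wedge topology is a Fréchet–Urysohn space: whenever t lies in the closure of a set A, there is a sequence of elements of A converging to t. -/
/-- The fine wedge topology: generated by the subbase of all wedges
`V t = Ici t` and all their complements. -/
def fineWedgeTopology (α : Type*) [PartialOrder α] : TopologicalSpace α :=
  TopologicalSpace.generateFrom
    {S | ∃ t : α, S = Set.Ici t ∨ S = (Set.Ici t)ᶜ}

open Filter Set Topology

namespace IsTree

variable {α : Type*} [PartialOrder α]

theorem le_total_of_le_s18 (htree : IsTree α) {a b c : α} (ha : a ≤ c) (hb : b ≤ c) :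
    a ≤ b ∨ b ≤ a := by
  rcases ha.eq_or_lt with rfl | hac
  · exact Or.inr hb
  rcases hb.eq_or_lt with rfl | hbc
  · exact Or.inl hac.le
  have := htree c
  rcases trichotomous_of (fun a b : {s : α // s < c} => (a : α) < b) ⟨a, hac⟩ ⟨b, hbc⟩ with
    h | h | h
  · exact Or.inl h.le
  · exact Or.inl (congrArg Subtype.val h).le
  · exact Or.inr h.le

theorem exists_covBy_le (htree : IsTree α) {t x : α} (htx : t < x) : ∃ m, t ⋖ m ∧ m ≤ x := by
  let Q : Set {s : α // s < x} := {s | t < s}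
  by_cases hQ : Q.Nonempty
  · let m := (htree x).wf.min Q hQ
    refine ⟨m, ⟨(htree x).wf.min_mem Q hQ, fun y hty hym => ?_⟩, m.2.le⟩
    exact (htree x).wf.not_lt_min Q (x := ⟨y, hym.trans m.2⟩) hty hym
  · exact ⟨x, ⟨htx, fun y hty hyx => hQ ⟨⟨y, hyx⟩, hty⟩⟩, le_rfl⟩

theorem eq_of_covBy_of_le (htree : IsTree α) {t m m' x : α} (hm : t ⋖ m) (hm' : t ⋖ m')
    (hmx : m ≤ x) (hm'x : m' ≤ x) : m = m' := by
  rcases htree.le_total_of_le_s18 hmx hm'x with h | h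
  · exact (hm'.eq_or_eq hm.le h).resolve_left hm.ne'
  · exact ((hm.eq_or_eq hm'.le h).resolve_left hm'.ne').symm

end IsTree

section FineWedge

variable {α : Type*} [PartialOrder α]

attribute [local instance] fineWedgeTopology

theorem isOpen_Ici_fineWedge (t : α) : IsOpen (Ici t) :=
  TopologicalSpace.isOpen_generateFrom_of_mem ⟨t, Or.inl rfl⟩

theorem isOpen_compl_Ici_fineWedge (t : α) : IsOpen (Ici t)ᶜ :=
  TopologicalSpace.isOpen_generateFrom_of_mem ⟨t, Or.inr rfl⟩

theorem infinite_covBy_le_of_mem_closure (htree : IsTree α) {A : Set α} {t : α}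
    (ht : t ∈ closure A) (htA : t ∉ A) : {m | t ⋖ m ∧ ∃ x ∈ A, m ≤ x}.Infinite := by
  intro hfin
  let W := Ici t ∩ ⋂ m ∈ hfin.toFinset, (Ici m)ᶜ
  have hW : IsOpen W := (isOpen_Ici_fineWedge t).inter
    (isOpen_biInter_finset fun m _ => isOpen_compl_Ici_fineWedge m)
  have htW : t ∈ W := ⟨le_rfl, mem_iInter₂.2 fun m hm => ((hfin.mem_toFinset.1 hm).1.lt).not_ge⟩
  obtain ⟨x, ⟨htx, hxW⟩, hxA⟩ := mem_closure_iff.1 ht W hW htW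
  obtain ⟨m, htm, hmx⟩ := htree.exists_covBy_le (htx.lt_of_ne (ne_of_mem_of_not_mem hxA htA).symm)
  exact mem_iInter₂.1 hxW m (hfin.mem_toFinset.2 ⟨htm, x, hxA, hmx⟩) hmx

theorem tendsto_fineWedge_of_forall_lt (htree : IsTree α) {ι : Type*} {l : Filter ι}
    {u : ι → α} {t : α} (htu : ∀ i, t ≤ u i) (hu : ∀ s, t < s → ∀ᶠ i in l, ¬ s ≤ u i) :
    Tendsto u l (𝓝 t) := by
  refine TopologicalSpace.tendsto_nhds_generateFrom_iff.2 ?_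
  rintro S ⟨s, rfl | rfl⟩ hts
  · exact Eventually.of_forall fun i => le_trans hts (htu i)
  · by_cases hlt : t < s
    · exact hu s hlt
    · refine Eventually.of_forall fun i hsu => ?_
      rcases htree.le_total_of_le_s18 hsu (htu i) with h | h
      · exact hts h
      · exact hlt (h.lt_of_ne fun h' => hts h'.ge)

theorem exists_seq_tendsto_of_mem_closure (htree : IsTree α) {A : Set α} {t : α}
    (ht : t ∈ closure A) : ∃ u : ℕ → α, (∀ n, u n ∈ A) ∧ Tendsto u atTop (𝓝 t) := by
  by_cases htA : t ∈ A
  · exact ⟨fun _ => t, fun _ => htA, tendsto_const_nhds⟩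
  let m := (infinite_covBy_le_of_mem_closure htree ht htA).natEmbedding
  choose u huA hmu using fun n => (m n).2.2
  refine ⟨u, huA, tendsto_fineWedge_of_forall_lt htree (fun n => (m n).2.1.le.trans (hmu n))
    fun s hts => ?_⟩
  obtain ⟨c, htc, hcs⟩ := htree.exists_covBy_le hts
  have hmc : ∀ᶠ n in atTop, (m n : α) ≠ c := by
    rw [← Nat.cofinite_eq_atTop]
    exact (Subtype.val_injective.comp m.injective).tendsto_cofinite.eventually
      (eventually_cofinite_ne c)
  filter_upwards [hmc] with n hn hsu
  exact hn (htree.eq_of_covBy_of_le (m n).2.1 htc (hmu n) (hcs.trans hsu))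

end FineWedge

theorem stmt_18 {α : Type*} [PartialOrder α] [τ : TopologicalSpace α]
    (hτ : τ = fineWedgeTopology α) (htree : IsTree α) :
    ∀ (A : Set α) (t : α), t ∈ closure A →
      ∃ u : ℕ → α, (∀ n, u n ∈ A) ∧
        Filter.Tendsto u Filter.atTop (nhds t) := by
  subst hτ
  exact fun _ _ => exists_seq_tendsto_of_mem_closure htree
end

section
/- Every tree T with the chevron topology is monotonically normal: there is an assignment (x, G) ↦ G_x of open sets with x ∈ G_x ⊆ G for each open G containing x, such that G_x ∩ H_y ≠ ∅ implies x ∈ H or y ∈ G. -/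
/-- The chevron `C[s,t] = (V_s ∖ V_t) ∪ {t}`. -/
def chevron {α : Type*} [PartialOrder α] (s t : α) : Set α :=
  (Set.Ici s \ Set.Ici t) ∪ {t}

/-- The chevron topology: generated by the singletons of minimal elements
together with the chevrons `C[s,t]` for `s ≤ t` with `s` minimal or on a
successor level. -/
def chevronTopology (α : Type*) [PartialOrder α] : TopologicalSpace α :=
  TopologicalSpace.generateFrom
    ({S | ∃ m : α, (∀ x : α, ¬ x < m) ∧ S = {m}} ∪
      {S | ∃ s t : α, s ≤ t ∧ MinimalOrSuccessorLevel s ∧ S = chevron s t})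

section Aux
variable {α : Type*} [PartialOrder α]

lemma mem_chevron {s t x : α} : x ∈ chevron s t ↔ (s ≤ x ∧ ¬ t ≤ x) ∨ x = t := by
  simp [chevron, or_comm]

lemma tree_comp (htree : IsTree α) {a b c : α} (hac : a ≤ c) (hbc : b ≤ c) :
    a ≤ b ∨ b ≤ a := by
  rcases eq_or_lt_of_le hac with rfl | hac'
  · exact Or.inr hbc
  rcases eq_or_lt_of_le hbc with rfl | hbc'
  · exact Or.inl hac'.le
  haveI := htree c
  rcases trichotomous_of (fun p q : {s : α // s < c} => (p : α) < q) ⟨a, hac'⟩ ⟨b, hbc'⟩ with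
    h | h | h
  · exact Or.inl h.le
  · exact Or.inl (le_of_eq (congrArg Subtype.val h))
  · exact Or.inr h.le

lemma tree_least (htree : IsTree α) {t : α} {Q : Set α} (hQ : ∀ u ∈ Q, u ≤ t)
    (hne : Q.Nonempty) : ∃ u₀ ∈ Q, ∀ v ∈ Q, u₀ ≤ v := by
  by_cases h : ∃ u ∈ Q, u < t
  · obtain ⟨u, huQ, hut⟩ := h
    obtain ⟨⟨u₀, hu₀t⟩, hu₀Q, hmin⟩ :=
      (htree t).toIsWellFounded.wf.has_min {s : {s : α // s < t} | (s : α) ∈ Q}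
        ⟨⟨u, hut⟩, huQ⟩
    refine ⟨u₀, hu₀Q, fun v hv => ?_⟩
    rcases tree_comp htree (hQ _ hv) hu₀t.le with h1 | h1
    · rcases eq_or_lt_of_le h1 with rfl | h2
      · exact le_rfl
      · exact absurd h2 (hmin ⟨v, lt_of_le_of_lt h1 hu₀t⟩ hv)
    · exact h1
  · push_neg at h
    obtain ⟨u, huQ⟩ := hne
    have hu : u = t := (hQ u huQ).lt_or_eq.resolve_left (h u huQ)
    refine ⟨u, huQ, fun v hv => ?_⟩
    have hv' : v = t := (hQ v hv).lt_or_eq.resolve_left (h v hv)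
    rw [hu, hv']

lemma chevron_mono {u₁ u₂ t : α} (h : u₁ ≤ u₂) : chevron u₂ t ⊆ chevron u₁ t := by
  intro w hw
  rw [mem_chevron] at hw ⊢
  rcases hw with ⟨h1, h2⟩ | rfl
  · exact Or.inl ⟨h.trans h1, h2⟩
  · exact Or.inr rfl

lemma minsucc_of (htree : IsTree α)
    (hsup : ∀ C : Set α, C.Nonempty → IsChain (· ≤ ·) C →
      (∃ b, b ∈ upperBounds C) → ∃ s, IsLUB C s)
    {u₀ t' : α} (hnle : ¬ u₀ ≤ t') (hlt : ∀ v, v < u₀ → v < t') :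
    MinimalOrSuccessorLevel u₀ := by
  by_cases hmin : ∀ s : α, ¬ s < u₀
  · exact Or.inl hmin
  push_neg at hmin
  obtain ⟨v₀, hv₀⟩ := hmin
  right
  by_contra hng
  push_neg at hng
  obtain ⟨w, hw⟩ := hsup {v | v < u₀} ⟨v₀, hv₀⟩
    (fun a ha b hb _ => tree_comp htree ha.le hb.le)
    ⟨u₀, fun v hv => le_of_lt hv⟩
  have hwu : w ≤ u₀ := hw.2 (fun v hv => le_of_lt hv)
  rcases lt_or_eq_of_le hwu with hlt' | rfl
  · obtain ⟨s, hs1, hs2⟩ := hng w hlt'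
    exact hs2 (hw.1 hs1)
  · exact hnle (hw.2 (fun v hv => (hlt v hv).le))

lemma chev_aux (htree : IsTree α) {u x v y z : α} (huv : u ≤ v) (hvy : v ≤ y)
    (hvz : v ≤ z) (hnxz : ¬ x ≤ z) :
    x ∈ chevron v y ∨ y ∈ chevron u x := by
  by_cases hxy : x = y
  · exact Or.inl (mem_chevron.mpr (Or.inr hxy))
  by_cases hvx : v ≤ x
  · by_cases hyx : y ≤ x
    · exact Or.inr (mem_chevron.mpr (Or.inl
        ⟨huv.trans hvy, fun h => hxy (le_antisymm h hyx)⟩))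
    · exact Or.inl (mem_chevron.mpr (Or.inl ⟨hvx, hyx⟩))
  · refine Or.inr (mem_chevron.mpr (Or.inl ⟨huv.trans hvy, fun hxy' => ?_⟩))
    rcases tree_comp htree hxy' hvy with h | h
    · exact hnxz (h.trans hvz)
    · exact hvx h

lemma chev_sep (htree : IsTree α) {u x v y : α} (hux : u ≤ x) (hvy : v ≤ y)
    (hne : (chevron u x ∩ chevron v y).Nonempty) :
    x ∈ chevron v y ∨ y ∈ chevron u x := by
  obtain ⟨z, hz1, hz2⟩ := hne
  rw [mem_chevron] at hz1 hz2
  rcases hz1 with ⟨huz, hnxz⟩ | rfl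
  · rcases hz2 with ⟨hvz, hnyz⟩ | rfl
    · rcases tree_comp htree huz hvz with huv | hvu
      · exact chev_aux htree huv hvy hvz hnxz
      · exact (chev_aux htree hvu hux huz hnyz).symm
    · exact Or.inr (mem_chevron.mpr (Or.inl ⟨huz, hnxz⟩))
  · left
    rw [mem_chevron]
    exact hz2

def chevBasis (α : Type*) [PartialOrder α] : Set (Set α) :=
  {S | ∃ m : α, (∀ x : α, ¬ x < m) ∧ S = {m}} ∪
    {S | ∃ s t : α, s ≤ t ∧ MinimalOrSuccessorLevel s ∧ S = chevron s t}

lemma chev_nbhd (htree : IsTree α)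
    (hsup : ∀ C : Set α, C.Nonempty → IsChain (· ≤ ·) C →
      (∃ b, b ∈ upperBounds C) → ∃ s, IsLUB C s)
    {G : Set α} (hG : TopologicalSpace.GenerateOpen (chevBasis α) G) :
    ∀ t ∈ G, ∃ u, u ≤ t ∧ MinimalOrSuccessorLevel u ∧ chevron u t ⊆ G := by
  induction hG with
  | basic g hg =>
    intro t ht
    rcases hg with ⟨m, hm, rfl⟩ | ⟨s, t', hst', hms, rfl⟩
    · rcases ht with rfl
      refine ⟨t, le_rfl, Or.inl hm, fun w hw => ?_⟩
      rcases mem_chevron.mp hw with ⟨h1, h2⟩ | rfl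
      · exact absurd h1 h2
      · rfl
    · rcases mem_chevron.mp ht with ⟨hst, hnt⟩ | rfl
      · by_cases htt' : t ≤ t'
        · refine ⟨s, hst, hms, fun w hw => ?_⟩
          rcases mem_chevron.mp hw with ⟨hsw, hnw⟩ | rfl
          · exact mem_chevron.mpr (Or.inl ⟨hsw, fun h => hnw (htt'.trans h)⟩)
          · exact mem_chevron.mpr (Or.inl ⟨hst, hnt⟩)
        · obtain ⟨u₀, ⟨hu₀t, hu₀nlt⟩, hleast⟩ :=
            tree_least htree (Q := {u | u ≤ t ∧ ¬ u < t'}) (fun u hu => hu.1)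
              ⟨t, le_rfl, fun h => htt' h.le⟩
          have hu₀ne : u₀ ≠ t' := fun h => hnt (h ▸ hu₀t)
          have hnle : ¬ u₀ ≤ t' := fun h => hu₀nlt (h.lt_of_ne hu₀ne)
          have hnt'u₀ : ¬ t' ≤ u₀ := fun h => hnt (h.trans hu₀t)
          have hlt : ∀ v, v < u₀ → v < t' := by
            intro v hv
            by_contra hvn
            exact absurd (hleast v ⟨hv.le.trans hu₀t, hvn⟩) (not_le_of_gt hv)
          refine ⟨u₀, hu₀t, minsucc_of htree hsup hnle hlt, fun w hw => ?_⟩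
          rcases mem_chevron.mp hw with ⟨hu₀w, hnw⟩ | rfl
          · refine mem_chevron.mpr (Or.inl ⟨?_, fun h => ?_⟩)
            · have hsu₀ : s ≤ u₀ := by
                rcases tree_comp htree hst hu₀t with h1 | h1
                · exact h1
                · exact absurd (h1.trans hst') hnle
              exact hsu₀.trans hu₀w
            · rcases tree_comp htree h hu₀w with h1 | h1
              · exact hnt'u₀ h1
              · exact hnle h1
          · exact mem_chevron.mpr (Or.inl ⟨hst, hnt⟩)
      · exact ⟨s, hst', hms, le_refl _⟩
  | univ =>
    intro t _
    obtain ⟨u₀, hu₀, hleast⟩ :=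
      tree_least htree (Q := Set.Iic t) (fun u hu => hu) ⟨t, le_rfl⟩
    exact ⟨u₀, hu₀, Or.inl (fun v hv => absurd (hleast v (hv.le.trans hu₀)) hv.not_ge),
      Set.subset_univ _⟩
  | inter g₁ g₂ h1 h2 ih1 ih2 =>
    intro t ht
    obtain ⟨u₁, h1le, h1m, h1s⟩ := ih1 t ht.1
    obtain ⟨u₂, h2le, h2m, h2s⟩ := ih2 t ht.2
    rcases tree_comp htree h1le h2le with h | h
    · exact ⟨u₂, h2le, h2m, Set.subset_inter ((chevron_mono h).trans h1s) h2s⟩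
    · exact ⟨u₁, h1le, h1m, Set.subset_inter h1s ((chevron_mono h).trans h2s)⟩
  | sUnion S hS ih =>
    intro t ht
    obtain ⟨g, hgS, hg⟩ := ht
    obtain ⟨u, hle, hm, hsub⟩ := ih g hgS t hg
    exact ⟨u, hle, hm, hsub.trans (Set.subset_sUnion_of_mem hgS)⟩

end Aux

theorem stmt_19 {α : Type*} [PartialOrder α] [τ : TopologicalSpace α]
    (hτ : τ = chevronTopology α) (htree : IsTree α)
    (hsup : ∀ C : Set α, C.Nonempty → IsChain (· ≤ ·) C →
      (∃ b, b ∈ upperBounds C) → ∃ s, IsLUB C s) :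
    ∃ f : α → Set α → Set α,
      (∀ (x : α) (G : Set α), IsOpen G → x ∈ G →
        IsOpen (f x G) ∧ x ∈ f x G ∧ f x G ⊆ G) ∧
      ∀ (x : α) (G : Set α) (y : α) (H : Set α),
        IsOpen G → x ∈ G → IsOpen H → y ∈ H →
        (f x G ∩ f y H).Nonempty → x ∈ H ∨ y ∈ G := by
  classical
  subst hτ
  letI : TopologicalSpace α := chevronTopology α
  have hopen : ∀ u t : α, u ≤ t → MinimalOrSuccessorLevel u → IsOpen (chevron u t) :=
    fun u t h1 h2 => TopologicalSpace.GenerateOpen.basic _ (Or.inr ⟨u, t, h1, h2, rfl⟩)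
  have key : ∀ x : α, ∀ G : Set α,
      ∃ u, IsOpen G → x ∈ G → u ≤ x ∧ MinimalOrSuccessorLevel u ∧ chevron u x ⊆ G := by
    intro x G
    by_cases h : IsOpen G ∧ x ∈ G
    · have h1 : TopologicalSpace.GenerateOpen (chevBasis α) G := h.1
      obtain ⟨u, hu⟩ := chev_nbhd htree hsup h1 x h.2
      exact ⟨u, fun _ _ => hu⟩
    · exact ⟨x, fun h1 h2 => absurd ⟨h1, h2⟩ h⟩
  choose g hg using key
  refine ⟨fun x G => if IsOpen G ∧ x ∈ G then chevron (g x G) x else ∅, ?_, ?_⟩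
  · intro x G hG hx
    simp only [if_pos (⟨hG, hx⟩ : IsOpen G ∧ x ∈ G)]
    obtain ⟨h1, h2, h3⟩ := hg x G hG hx
    exact ⟨hopen _ _ h1 h2, mem_chevron.mpr (Or.inr rfl), h3⟩
  · intro x G y H hG hx hH hy hne
    simp only [if_pos (⟨hG, hx⟩ : IsOpen G ∧ x ∈ G), if_pos (⟨hH, hy⟩ : IsOpen H ∧ y ∈ H)] at hne
    obtain ⟨hux, _, hsubG⟩ := hg x G hG hx
    obtain ⟨hvy, _, hsubH⟩ := hg y H hH hy
    rcases chev_sep htree hux hvy hne with h | h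
    · exact Or.inl (hsubH h)
    · exact Or.inr (hsubG h)
end
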